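/- arXiv:1903.11384 — 2 statements merged into one kernel-verified Lean document; each statement's English description precedes it below -/
import Mathlib

section
/- The higher derangement numbers d_n^k := e_n^k / k! satisfy the recurrence d_n^k = (1/k)(d_n^{k-1} + d_{n-1}^{k-1}) for 1 ≤ k ≤ n. -/
/-- Euler's difference table: diagonal `eulerE j j = j!` and
`eulerE k j = eulerE k (j+1) - eulerE (k-1) j`. -/
def eulerE : ℕ → ℕ → ℤ
  | k, j =>
    if _h : k ≤ j then (Nat.factorial k : ℤ)
    else eulerE k (j + 1) - eulerE (k - 1) j
  termination_by k j => k - j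
  decreasing_by all_goals omega

/-- Higher derangement numbers `dTab n k = eulerE n k / k!` (as rationals). -/
noncomputable def dTab (n k : ℕ) : ℚ := (eulerE n k : ℚ) / (Nat.factorial k : ℚ)

theorem eulerE_of_lt {n j : ℕ} (h : j < n) :
    eulerE n j = eulerE n (j + 1) - eulerE (n - 1) j := by
  rw [eulerE, dif_neg (Nat.not_le.mpr h)]

theorem eulerE_succ_right {n j : ℕ} (h : j < n) :
    eulerE n (j + 1) = eulerE n j + eulerE (n - 1) j := by
  rw [eulerE_of_lt h]
  ring

theorem dTab_succ_right {n j : ℕ} (h : j < n) :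
    dTab n (j + 1) = (dTab n j + dTab (n - 1) j) / (j + 1) := by
  have hfac : (j.factorial : ℚ) ≠ 0 := by positivity
  simp only [dTab, eulerE_succ_right h, Nat.factorial_succ]
  push_cast
  field_simp

theorem dTab_recurrence (n k : ℕ) (hk : 1 ≤ k) (hkn : k ≤ n) :
    dTab n k = (1 / (k : ℚ)) * (dTab n (k - 1) + dTab (n - 1) (k - 1)) := by
  obtain ⟨j, rfl⟩ := Nat.exists_eq_add_of_le' hk
  rw [Nat.add_sub_cancel, dTab_succ_right (by omega)]
  push_cast
  ring
end

section
/- The entries of Euler's difference table satisfy e_n^k = ∑_{j=0}^{n-k} (-1)^j C(n-k, j) (n-j)! for 0 ≤ k ≤ n. -/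
/-!
Entry `e_{m+d}^m` is the `d`-th forward difference of `x ↦ x!` at `m`: the recurrence
`e_{m+d+1}^m = e_{m+d+1}^{m+1} - e_{m+d}^m` is exactly `Δ^{d+1} f (m) = Δ^d f (m+1) - Δ^d f (m)`.
The alternating sum is then the Newton expansion of `Δ^d f (m)`, read backwards.
-/

open Nat

lemma eulerE_add_eq_fwdDiff_iter_factorial (m d : ℕ) :
    eulerE (m + d) m = (fwdDiff 1)^[d] (fun x ↦ (x ! : ℤ)) m := by
  induction d generalizing m with
  | zero => simp [eulerE]
  | succ d ih =>
    rw [eulerE, dif_neg (by omega), Function.iterate_succ_apply', fwdDiff,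
      ← ih (m + 1), ← ih m]
    congr 2; omega

theorem eulerE_alternating_sum (n k : ℕ) (hkn : k ≤ n) :
    eulerE n k =
      ∑ j ∈ Finset.range (n - k + 1),
        (-1) ^ j * (Nat.choose (n - k) j : ℤ) * (Nat.factorial (n - j) : ℤ) := by
  obtain ⟨d, rfl⟩ := Nat.exists_eq_add_of_le hkn
  rw [eulerE_add_eq_fwdDiff_iter_factorial, fwdDiff_iter_eq_sum_shift, Nat.add_sub_cancel_left,
    ← Finset.sum_range_reflect]
  refine Finset.sum_congr rfl fun j hj ↦ ?_
  have hjd : j ≤ d := Nat.lt_succ_iff.mp (Finset.mem_range.mp hj)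
  rw [show d + 1 - 1 - j = d - j by omega, Nat.choose_symm hjd, Nat.sub_sub_self hjd,
    smul_eq_mul, smul_eq_mul, mul_one, ← Nat.add_sub_assoc hjd]
end
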